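/- Let G be a connected bipartite finite simple graph on n ≥ 2 vertices with largest adjacency eigenvalue λ_1. Then EE(G) ≥ 2cosh(λ_1) + (n − 2). -/

import Mathlib

open Finset Real

namespace EstradaIndexPaper

/-- The adjacency matrix of a simple graph over `ℝ` is Hermitian. -/
theorem adjMatrix_isHermitian {n : ℕ} (G : SimpleGraph (Fin n)) [DecidableRel G.Adj] :
    (G.adjMatrix ℝ).IsHermitian := by
  unfold Matrix.IsHermitian
  rw [Matrix.conjTranspose_eq_transpose_of_trivial]
  exact G.isSymm_adjMatrix

/-- The eigenvalues of the adjacency matrix of `G`. -/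
noncomputable def eig {n : ℕ} (G : SimpleGraph (Fin n)) [DecidableRel G.Adj] : Fin n → ℝ :=
  (adjMatrix_isHermitian G).eigenvalues

/-- The Estrada index of `G`: the sum of `e^{λ_i}` over the adjacency eigenvalues. -/
noncomputable def EE {n : ℕ} (G : SimpleGraph (Fin n)) [DecidableRel G.Adj] : ℝ :=
  ∑ i, Real.exp (eig G i)

/-- The largest adjacency eigenvalue `λ₁` of `G`. -/
noncomputable def lam1 {n : ℕ} (G : SimpleGraph (Fin n)) [DecidableRel G.Adj] : ℝ :=
  ⨆ i, eig G i

/-- The Randić index `R(G) = Σ_{ij ∈ E(G)} (d(i)d(j))^{-1/2}`. -/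
noncomputable def randic {n : ℕ} (G : SimpleGraph (Fin n)) [DecidableRel G.Adj] : ℝ :=
  ∑ e ∈ G.edgeFinset,
    Sym2.lift ⟨fun i j => (Real.sqrt ((G.degree i : ℝ) * (G.degree j : ℝ)))⁻¹,
      fun i j => by simp [mul_comm]⟩ e

/-- The general Randić index `R_{1/2}(G) = Σ_{ij ∈ E(G)} (d(i)d(j))^{1/2}`. -/
noncomputable def randicHalf {n : ℕ} (G : SimpleGraph (Fin n)) [DecidableRel G.Adj] : ℝ :=
  ∑ e ∈ G.edgeFinset,
    Sym2.lift ⟨fun i j => Real.sqrt ((G.degree i : ℝ) * (G.degree j : ℝ)),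
      fun i j => by simp [mul_comm]⟩ e


/-!
The adjacency matrix has trace zero, so the eigenvalues sum to zero. A 2-colouring gives a
`±1` diagonal matrix `D` with `D A D = -A`, so the spectrum of a bipartite graph is symmetric and
`-λ₁` is an eigenvalue at an index other than that of `λ₁` (if `λ₁ = 0`, all eigenvalues vanish).
Since `e^x - 1 - x ≥ 0`, summing these terms over the spectrum and keeping only the two for `±λ₁`
gives `EE(G) - n ≥ 2 cosh λ₁ - 2`.
-/

section Bipartite

variable {V R : Type*} [CommRing R] {G : SimpleGraph V}

def coloringSign (C : G.Coloring (Fin 2)) (v : V) : R := if C v = 0 then 1 else -1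

lemma coloringSign_mul_self (C : G.Coloring (Fin 2)) (v : V) :
    coloringSign (R := R) C v * coloringSign C v = 1 := by
  unfold coloringSign; split_ifs <;> simp

lemma coloringSign_mul_of_adj (C : G.Coloring (Fin 2)) {u v : V} (h : G.Adj u v) :
    coloringSign (R := R) C u * coloringSign C v = -1 := by
  have hne := C.valid h
  unfold coloringSign
  split_ifs with hu hv hv
  · exact absurd (hu.trans hv.symm) hne
  · simp
  · simp
  · exact absurd ((Fin.eq_one_of_ne_zero _ hu).trans (Fin.eq_one_of_ne_zero _ hv).symm) hne

variable [Fintype V] [DecidableEq V]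

lemma diagonal_coloringSign_mul_self (C : G.Coloring (Fin 2)) :
    Matrix.diagonal (coloringSign (R := R) C) * Matrix.diagonal (coloringSign C) = 1 := by
  rw [Matrix.diagonal_mul_diagonal, ← Matrix.diagonal_one]
  exact congrArg _ (funext (coloringSign_mul_self C))

variable [DecidableRel G.Adj]

lemma diagonal_coloringSign_conj_adjMatrix (C : G.Coloring (Fin 2)) :
    Matrix.diagonal (coloringSign C) * G.adjMatrix R * Matrix.diagonal (coloringSign C) =
      -G.adjMatrix R := by
  ext u v
  rw [Matrix.mul_diagonal, Matrix.diagonal_mul, Matrix.neg_apply]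
  by_cases h : G.Adj u v
  · simp [h, coloringSign_mul_of_adj C h]
  · simp [h]

theorem neg_spectrum_adjMatrix_of_colorable_two (hG : G.Colorable 2) :
    -spectrum R (G.adjMatrix R) = spectrum R (G.adjMatrix R) := by
  obtain ⟨C⟩ := hG
  let D : (Matrix V V R)ˣ := ⟨_, _, diagonal_coloringSign_mul_self C,
    diagonal_coloringSign_mul_self C⟩
  have hconj : (D : Matrix V V R) * G.adjMatrix R * ((D⁻¹ : (Matrix V V R)ˣ) : Matrix V V R) =
      -G.adjMatrix R :=
    diagonal_coloringSign_conj_adjMatrix C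
  rw [spectrum.neg_eq, ← hconj, spectrum.units_conjugate]

end Bipartite

section RealSequences

variable {ι : Type*} [Fintype ι]

theorem two_mul_cosh_add_card_sub_two_le_sum_exp {x : ι → ℝ} (hsum : ∑ k, x k = 0)
    {i j : ι} (hij : i ≠ j) (hji : x j = -x i) :
    2 * cosh (x i) + (Fintype.card ι - 2) ≤ ∑ k, exp (x k) := by
  classical
  have hgap : ∀ k, 0 ≤ exp (x k) - 1 - x k := fun k => by linarith [add_one_le_exp (x k)]
  have hpair : ∑ k ∈ {i, j}, (exp (x k) - 1 - x k) ≤ ∑ k, (exp (x k) - 1 - x k) :=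
    Finset.sum_le_sum_of_subset_of_nonneg (Finset.subset_univ _) fun k _ _ => hgap k
  rw [Finset.sum_pair hij, hji, Finset.sum_sub_distrib, Finset.sum_sub_distrib, hsum] at hpair
  simp only [Finset.sum_const, Finset.card_univ, nsmul_eq_mul, mul_one] at hpair
  rw [cosh_eq]
  linarith

lemma exists_ne_eq_neg_of_forall_le {x : ι → ℝ} (hsum : ∑ k, x k = 0) {i : ι}
    (hmax : ∀ k, x k ≤ x i) (hneg : -x i ∈ Set.range x) (hcard : 1 < Fintype.card ι) :
    ∃ j, j ≠ i ∧ x j = -x i := by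
  by_cases hi : x i = 0
  · have hzero : ∀ k, x k = 0 := fun k =>
      (Finset.sum_eq_zero_iff_of_nonpos fun k _ => hi ▸ hmax k).mp hsum k (Finset.mem_univ k)
    obtain ⟨j, hj⟩ := Fintype.exists_ne_of_one_lt_card hcard i
    exact ⟨j, hj, by rw [hzero, hzero, neg_zero]⟩
  · obtain ⟨j, hj⟩ := hneg
    refine ⟨j, ?_, hj⟩
    rintro rfl
    exact hi (by linarith)

end RealSequences

lemma sum_eig_eq_zero {n : ℕ} (G : SimpleGraph (Fin n)) [DecidableRel G.Adj] :
    ∑ i, eig G i = 0 := by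
  simpa [eig] using ((adjMatrix_isHermitian G).trace_eq_sum_eigenvalues).symm.trans
    (G.trace_adjMatrix (α := ℝ))

lemma neg_eig_mem_range {n : ℕ} {G : SimpleGraph (Fin n)} [DecidableRel G.Adj]
    (hG : G.Colorable 2) (i : Fin n) : -eig G i ∈ Set.range (eig G) := by
  rw [eig, ← (adjMatrix_isHermitian G).spectrum_real_eq_range_eigenvalues,
    ← neg_spectrum_adjMatrix_of_colorable_two hG, Set.neg_mem_neg,
    (adjMatrix_isHermitian G).spectrum_real_eq_range_eigenvalues]
  exact Set.mem_range_self i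

theorem stmt8_general {n : ℕ} (hn : 2 ≤ n) (G : SimpleGraph (Fin n)) [DecidableRel G.Adj]
    (hbip : G.Colorable 2) :
    EE G ≥ 2 * Real.cosh (lam1 G) + ((n : ℝ) - 2) := by
  have : Nonempty (Fin n) := ⟨⟨0, by omega⟩⟩
  obtain ⟨i, hi⟩ := exists_eq_ciSup_of_finite (f := eig G)
  have hmax : ∀ k, eig G k ≤ eig G i := hi ▸ le_ciSup (Set.finite_range _).bddAbove
  obtain ⟨j, hji, hj⟩ := exists_ne_eq_neg_of_forall_le (sum_eig_eq_zero G) hmax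
    (neg_eig_mem_range hbip i) (by rw [Fintype.card_fin]; omega)
  have hEE := two_mul_cosh_add_card_sub_two_le_sum_exp (sum_eig_eq_zero G) hji.symm hj
  rw [Fintype.card_fin] at hEE
  rw [lam1, ← hi]
  exact hEE

theorem stmt8 {n : ℕ} (hn : 2 ≤ n) (G : SimpleGraph (Fin n)) [DecidableRel G.Adj]
    (hG : G.Connected) (hbip : G.Colorable 2) :
    EE G ≥ 2 * Real.cosh (lam1 G) + ((n : ℝ) - 2) :=
  stmt8_general hn G hbip

end EstradaIndexPaper
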